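/- Let p, q ∈ [1, ∞), α ∈ (−1, q−1), ℓ = 1 − (1+α)/q, and N_0 > 0. Let φ ∈ C_0^∞(ℝ^d) with 0 ≤ φ ≤ 1, supp φ ⊂ B_1, ∫φ = 1, and set φ_k(x) = 2^{kd} φ(2^k x). Let {ψ_k}_{k ∈ ℤ} be smooth functions on ℝ with 0 ≤ ψ_k ≤ 1, supp ψ_k ⊂ (7·2^{−k−4}, 9·2^{−k−3}), |ψ_k'(y)| ≤ N_0 2^k for all y, and Σ_{k ∈ ℤ} ψ_k(y) = 1 for all y > 0. Define E(g)(x,y) = Σ_{k=1}^∞ ψ_k(y) (φ_k * g)(x). Then for every g ∈ L_p(ℝ^d) with ‖g‖_{B^ℓ_{p,q}(ℝ^d)} < ∞, lim_{y → 0^+} y^{−ℓ} ‖E(g)(·, y) − g‖_{L_p(ℝ^d)} = 0. -/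

import Mathlib

open MeasureTheory ENNReal

/-- Burenkov's extension operator `E(g)(x,y) = Σ_{k=1}^∞ ψ_k(y) (φ_k * g)(x)`,
where `φ_k(x) = 2^{kd} φ(2^k x)`. -/
noncomputable def burenkovExt (d : ℕ) (φ : EuclideanSpace ℝ (Fin d) → ℝ)
    (ψ : ℤ → ℝ → ℝ) (g : EuclideanSpace ℝ (Fin d) → ℝ) :
    EuclideanSpace ℝ (Fin d) × ℝ → ℝ :=
  fun zy => ∑' k : ℕ, ψ ((k : ℤ) + 1) zy.2 *
    ∫ z, (2 : ℝ) ^ ((k + 1) * d) * φ ((2 : ℝ) ^ (k + 1) • (zy.1 - z)) * g z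

namespace BurenkovAux

open Metric Set Filter Function Topology

variable {d : ℕ}

/-- `L^p` norm of the difference `g(·+h) - g`. -/
noncomputable def bT (d : ℕ) (P : ℝ≥0∞) (g : EuclideanSpace ℝ (Fin d) → ℝ)
    (h : EuclideanSpace ℝ (Fin d)) : ℝ≥0∞ :=
  eLpNorm (fun x => g (x + h) - g x) P volume

/-- modulus of continuity in `L^p`. -/
noncomputable def bOm (d : ℕ) (P : ℝ≥0∞) (g : EuclideanSpace ℝ (Fin d) → ℝ)
    (t : ℝ) : ℝ≥0∞ :=
  ⨆ (h : EuclideanSpace ℝ (Fin d)) (_ : ‖h‖ ≤ t), bT d P g h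

lemma mp_subLeft (a : EuclideanSpace ℝ (Fin d)) :
    MeasurePreserving (fun x : EuclideanSpace ℝ (Fin d) => a - x) volume volume := by
  have : (fun x : EuclideanSpace ℝ (Fin d) => a - x) = (fun x => a + x) ∘ (fun x => -x) := by
    funext x; simp [sub_eq_add_neg]
  rw [this]
  exact (measurePreserving_add_left volume a).comp (Measure.measurePreserving_neg volume)

lemma asm_shift {g : EuclideanSpace ℝ (Fin d) → ℝ} (hgm : Measurable g)
    (h : EuclideanSpace ℝ (Fin d)) :
    AEStronglyMeasurable (fun x => g (x + h)) (volume : Measure (EuclideanSpace ℝ (Fin d))) :=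
  (hgm.comp (measurable_add_const h)).aestronglyMeasurable

lemma bT_shift_eq {g : EuclideanSpace ℝ (Fin d) → ℝ} (hgm : Measurable g) (P : ℝ≥0∞)
    (a b : EuclideanSpace ℝ (Fin d)) :
    eLpNorm (fun x => g (x + b + a) - g (x + b)) P volume = bT d P g a := by
  have h := eLpNorm_comp_measurePreserving (μ := (volume : Measure (EuclideanSpace ℝ (Fin d))))
    (ν := volume) (f := fun x => x + b) (g := fun x => g (x + a) - g x)
    (p := P) (((asm_shift hgm a).sub hgm.aestronglyMeasurable))
    (measurePreserving_add_right volume b)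
  simpa [Function.comp_def, bT] using h

lemma bT_add_le {g : EuclideanSpace ℝ (Fin d) → ℝ} (hgm : Measurable g) {P : ℝ≥0∞}
    (hP : 1 ≤ P) (a b : EuclideanSpace ℝ (Fin d)) :
    bT d P g (a + b) ≤ bT d P g a + bT d P g b := by
  have hfun : (fun x => g (x + (a + b)) - g x) =
      (fun x => g (x + b + a) - g (x + b)) + fun x => g (x + b) - g x := by
    funext x
    have : x + (a + b) = x + b + a := by abel
    simp only [Pi.add_apply, this]
    ring
  have m1 : AEStronglyMeasurable (fun x => g (x + b + a) - g (x + b))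
      (volume : Measure (EuclideanSpace ℝ (Fin d))) :=
    ((hgm.comp ((measurable_add_const b).add_const a)).sub
      (hgm.comp (measurable_add_const b))).aestronglyMeasurable
  have m2 : AEStronglyMeasurable (fun x => g (x + b) - g x)
      (volume : Measure (EuclideanSpace ℝ (Fin d))) :=
    ((hgm.comp (measurable_add_const b)).sub hgm).aestronglyMeasurable
  calc bT d P g (a + b) = eLpNorm ((fun x => g (x + b + a) - g (x + b)) +
        fun x => g (x + b) - g x) P volume := by rw [bT, hfun]
    _ ≤ eLpNorm (fun x => g (x + b + a) - g (x + b)) P volume +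
        eLpNorm (fun x => g (x + b) - g x) P volume := eLpNorm_add_le m1 m2 hP
    _ = bT d P g a + bT d P g b := by rw [bT_shift_eq hgm P a b]; rfl

lemma bT_le {g : EuclideanSpace ℝ (Fin d) → ℝ} (hgm : Measurable g) {P : ℝ≥0∞}
    (hP : 1 ≤ P) (h : EuclideanSpace ℝ (Fin d)) :
    bT d P g h ≤ 2 * eLpNorm g P volume := by
  have h1 : eLpNorm ((fun x => g (x + h)) - g) P volume ≤
      eLpNorm (fun x => g (x + h)) P volume + eLpNorm g P volume :=
    eLpNorm_sub_le (asm_shift hgm h) hgm.aestronglyMeasurable hP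
  have h2 : eLpNorm (fun x => g (x + h)) P volume = eLpNorm g P volume := by
    have := eLpNorm_comp_measurePreserving (μ := (volume : Measure (EuclideanSpace ℝ (Fin d))))
      (ν := volume) (f := fun x => x + h) (g := g) (p := P)
      hgm.aestronglyMeasurable (measurePreserving_add_right volume h)
    simpa [Function.comp_def] using this
  calc bT d P g h = eLpNorm ((fun x => g (x + h)) - g) P volume := rfl
    _ ≤ eLpNorm (fun x => g (x + h)) P volume + eLpNorm g P volume := h1
    _ = 2 * eLpNorm g P volume := by rw [h2, two_mul]

lemma bT_meas {g : EuclideanSpace ℝ (Fin d) → ℝ} (hgm : Measurable g) {P : ℝ≥0∞}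
    (hP0 : P ≠ 0) (hPt : P ≠ ⊤) : Measurable (bT d P g) := by
  have : bT d P g = fun h =>
      (∫⁻ x, (‖g (x + h) - g x‖₊ : ℝ≥0∞) ^ P.toReal) ^ (1 / P.toReal) := by
    funext h
    rw [bT, eLpNorm_eq_lintegral_rpow_enorm_toReal hP0 hPt]; rfl
  rw [this]
  have hin : Measurable fun h : EuclideanSpace ℝ (Fin d) =>
      ∫⁻ x, (‖g (x + h) - g x‖₊ : ℝ≥0∞) ^ P.toReal := by
    apply Measurable.lintegral_prod_right'
      (f := fun hx : EuclideanSpace ℝ (Fin d) × EuclideanSpace ℝ (Fin d) =>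
        (‖g (hx.2 + hx.1) - g hx.2‖₊ : ℝ≥0∞) ^ P.toReal)
    exact ((((hgm.comp (measurable_snd.add measurable_fst)).sub
      (hgm.comp measurable_snd)).nnnorm).coe_nnreal_ennreal).pow_const P.toReal
  exact hin.pow_const _

lemma bOm_mono {g : EuclideanSpace ℝ (Fin d) → ℝ} (P : ℝ≥0∞) {t s : ℝ} (hts : t ≤ s) :
    bOm d P g t ≤ bOm d P g s := by
  refine iSup_le fun h => iSup_le fun hh => ?_
  exact le_iSup₂ (f := fun h (_ : ‖h‖ ≤ s) => bT d P g h) h (hh.trans hts)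

lemma bT_le_bOm {g : EuclideanSpace ℝ (Fin d) → ℝ} (P : ℝ≥0∞)
    {h : EuclideanSpace ℝ (Fin d)} {t : ℝ} (hh : ‖h‖ ≤ t) :
    bT d P g h ≤ bOm d P g t :=
  le_iSup₂ (f := fun h (_ : ‖h‖ ≤ t) => bT d P g h) h hh

/-- Jensen's inequality for a (sub)probability measure, from Hölder. -/
lemma jensen_prob {X : Type*} [MeasurableSpace X] {ν : Measure X} (hν : ν univ = 1)
    {u : X → ℝ≥0∞} (hu : AEMeasurable u ν) {r : ℝ} (hr : 1 ≤ r) :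
    (∫⁻ a, u a ∂ν) ^ r ≤ ∫⁻ a, u a ^ r ∂ν := by
  rcases eq_or_lt_of_le hr with h1 | h1
  · simp [← h1]
  have hr0 : r ≠ 0 := by positivity
  have hr1 : r - 1 ≠ 0 := by linarith
  have hpq : Real.HolderConjugate r (r / (r - 1)) :=
    (Real.holderConjugate_iff_eq_conjExponent h1).2 rfl
  have hold := ENNReal.lintegral_mul_le_Lp_mul_Lq ν hpq hu aemeasurable_const (g := fun _ => 1)
  simp only [Pi.mul_apply, mul_one, ENNReal.one_rpow, lintegral_const, one_mul, hν,
    ENNReal.one_rpow] at hold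
  calc (∫⁻ a, u a ∂ν) ^ r ≤ ((∫⁻ a, u a ^ r ∂ν) ^ (1 / r)) ^ r :=
        ENNReal.rpow_le_rpow hold (by positivity)
    _ = ∫⁻ a, u a ^ r ∂ν := by
        rw [← ENNReal.rpow_mul, one_div, inv_mul_cancel₀ hr0, ENNReal.rpow_one]

/-- `(a+b)^r ≤ 2^r * (a^r + b^r)` in `ℝ≥0∞`. -/
lemma add_rpow_le {a b : ℝ≥0∞} {r : ℝ} (hr : 0 ≤ r) :
    (a + b) ^ r ≤ 2 ^ r * (a ^ r + b ^ r) := by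
  have h1 : a + b ≤ 2 * max a b := by
    rw [two_mul]
    exact add_le_add (le_max_left a b) (le_max_right a b)
  calc (a + b) ^ r ≤ (2 * max a b) ^ r := ENNReal.rpow_le_rpow h1 hr
    _ = 2 ^ r * (max a b) ^ r := ENNReal.mul_rpow_of_nonneg _ _ hr
    _ ≤ 2 ^ r * (a ^ r + b ^ r) := by
        gcongr
        rcases le_total a b with h | h
        · rw [max_eq_right h]; exact le_add_self
        · rw [max_eq_left h]; exact le_add_right le_rfl

/-- The main decay estimate: the Besov seminorm being finite forces
`t^{-ℓ} ω(t/4) → 0` as `t → 0⁺`. -/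
lemma claimA (P : ℝ≥0∞) (hP0 : P ≠ 0) (hPt : P ≠ ⊤) (hP1 : 1 ≤ P)
    {g : EuclideanSpace ℝ (Fin d) → ℝ} (hgm : Measurable g) (hg : MemLp g P volume)
    (q ℓ : ℝ) (hq : 1 ≤ q) (hl : 0 < ℓ)
    (hB : (∫⁻ h : EuclideanSpace ℝ (Fin d),
      bT d P g h ^ q * ENNReal.ofReal (‖h‖ ^ (-(ℓ * q) - d))) ≠ ⊤) :
    Tendsto (fun t : ℝ => ENNReal.ofReal (t ^ (-ℓ)) * bOm d P g (t / 4))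
      (nhdsWithin 0 (Set.Ioi 0)) (nhds 0) := by
  rcases Nat.eq_zero_or_pos d with hd | hd
  · -- dimension 0 : everything is trivial
    subst hd
    have hbT : ∀ h, bT 0 P g h = 0 := by
      intro h
      have h0 : h = 0 := Subsingleton.elim h 0
      subst h0
      have : (fun x : EuclideanSpace ℝ (Fin 0) => g (x + 0) - g x) = fun _ => 0 := by
        funext x; rw [add_zero, sub_self]
      rw [bT, this]
      exact eLpNorm_zero'
    have hOm : ∀ t : ℝ, bOm 0 P g t = 0 := by
      intro t
      rw [bOm]
      simp [hbT]
    simp only [hOm, mul_zero]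
    exact tendsto_const_nhds
  -- now d ≥ 1
  have hq0 : (0 : ℝ) < q := by linarith
  have hq0' : q ≠ 0 := hq0.ne'
  haveI : Nontrivial (EuclideanSpace ℝ (Fin d)) := by
    have h0 : 0 < Module.finrank ℝ (EuclideanSpace ℝ (Fin d)) := by
      rw [finrank_euclideanSpace_fin]; omega
    exact Module.finrank_pos_iff.1 h0
  set F : EuclideanSpace ℝ (Fin d) → ℝ≥0∞ :=
    fun u => bT d P g u ^ q * ENNReal.ofReal (‖u‖ ^ (-(ℓ * q) - d)) with hF
  have hFmeas : Measurable F :=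
    (((bT_meas hgm hP0 hPt).pow_const q)).mul
      ((measurable_norm.pow_const (-(ℓ * q) - d)).ennreal_ofReal)
  set ν : Measure (EuclideanSpace ℝ (Fin d)) := volume.withDensity F with hν
  have hνfin : ν Set.univ ≠ ⊤ := by
    rw [hν, withDensity_apply _ MeasurableSet.univ, setLIntegral_univ]; exact hB
  set Bv : ℝ≥0∞ := volume (Metric.ball (0 : EuclideanSpace ℝ (Fin d)) 1) with hBv
  have hBvpos : 0 < Bv := Metric.measure_ball_pos _ _ one_pos
  have hBvfin : Bv ≠ ⊤ := measure_ball_lt_top.ne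
  set cd : ℝ := 1 - (1 / 2 : ℝ) ^ d with hcd
  have hcdpos : 0 < cd := by
    rw [hcd]
    have h1 : (1 / 2 : ℝ) ^ d < 1 := pow_lt_one₀ (by norm_num) (by norm_num) (by omega)
    linarith
  set C0 : ℝ≥0∞ := ENNReal.ofReal cd * Bv with hC0
  have hC0pos : C0 ≠ 0 := by
    rw [hC0]
    exact mul_ne_zero (ENNReal.ofReal_pos.2 hcdpos).ne' hBvpos.ne'
  have hC0fin : C0 ≠ ⊤ := ENNReal.mul_ne_top ENNReal.ofReal_ne_top hBvfin
  set K : ℝ≥0∞ := 2 ^ (q + 1) * ENNReal.ofReal ((2 : ℝ) ^ (ℓ * q + d)) with hK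
  have hKfin : K ≠ ⊤ := by
    rw [hK]
    exact ENNReal.mul_ne_top (by simp [ENNReal.rpow_eq_top_iff]) ENNReal.ofReal_ne_top
  have hbTq_meas : Measurable fun u => bT d P g u ^ q :=
    (bT_meas hgm hP0 hPt).pow_const q
  -- main pointwise estimate
  have key : ∀ t : ℝ, 0 < t → ∀ h : EuclideanSpace ℝ (Fin d), ‖h‖ ≤ t / 4 →
      (ENNReal.ofReal (t ^ (-ℓ)) * bT d P g h) ^ q ≤
      K * ν (Metric.closedBall 0 (2 * t)) / C0 := by
    intro t ht h hh
    set S : Set (EuclideanSpace ℝ (Fin d)) :=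
      Metric.closedBall 0 t \ Metric.ball 0 (t / 2) with hS
    set A : Set (EuclideanSpace ℝ (Fin d)) :=
      Metric.closedBall 0 (2 * t) \ Metric.ball 0 (t / 4) with hA
    set J : ℝ≥0∞ := ∫⁻ u in A, bT d P g u ^ q ∂volume with hJ
    have hSA : S ⊆ A := by
      rintro u ⟨hu1, hu2⟩
      rw [Metric.mem_closedBall, dist_zero_right] at hu1
      rw [Metric.mem_ball, dist_zero_right, not_lt] at hu2
      constructor
      · rw [Metric.mem_closedBall, dist_zero_right]; linarith
      · rw [Metric.mem_ball, dist_zero_right, not_lt]; linarith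
    -- pointwise bound on S
    have hpt : ∀ u ∈ S, bT d P g h ^ q ≤
        2 ^ q * (bT d P g u ^ q + bT d P g (h - u) ^ q) := by
      intro u _
      have h1 : bT d P g h ≤ bT d P g u + bT d P g (h - u) := by
        have h2 : h = u + (h - u) := by abel
        calc bT d P g h = bT d P g (u + (h - u)) := by rw [← h2]
          _ ≤ _ := bT_add_le hgm hP1 u (h - u)
      calc bT d P g h ^ q ≤ (bT d P g u + bT d P g (h - u)) ^ q :=
            ENNReal.rpow_le_rpow h1 hq0.le
        _ ≤ _ := add_rpow_le hq0.le
    have hint1 : bT d P g h ^ q * volume S ≤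
        2 ^ q * ((∫⁻ u in S, bT d P g u ^ q ∂volume) +
          ∫⁻ u in S, bT d P g (h - u) ^ q ∂volume) := by
      have h2 : ∫⁻ _ in S, bT d P g h ^ q ∂volume = bT d P g h ^ q * volume S :=
        setLIntegral_const _ _
      have hmeas2 : Measurable fun u => bT d P g (h - u) ^ q :=
        ((bT_meas hgm hP0 hPt).comp (measurable_const.sub measurable_id)).pow_const q
      have h3 : ∫⁻ _ in S, bT d P g h ^ q ∂volume ≤
          ∫⁻ u in S, 2 ^ q * (bT d P g u ^ q + bT d P g (h - u) ^ q) ∂volume :=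
        setLIntegral_mono (((hbTq_meas.add hmeas2)).const_mul _) hpt
      rw [← h2]
      refine h3.trans (le_of_eq ?_)
      rw [lintegral_const_mul _ (f := fun u => bT d P g u ^ q + bT d P g (h - u) ^ q) (hbTq_meas.add hmeas2), lintegral_add_left hbTq_meas]
    -- change of variables
    have hcv : ∫⁻ u in S, bT d P g (h - u) ^ q ∂volume ≤ J := by
      have h4 := (mp_subLeft h).setLIntegral_comp_emb
        (MeasurableEquiv.subLeft h).measurableEmbedding (fun u => bT d P g u ^ q) S
      rw [h4]
      apply lintegral_mono_set
      rintro v ⟨u, hu, rfl⟩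
      obtain ⟨hu1, hu2⟩ := hu
      rw [Metric.mem_closedBall, dist_zero_right] at hu1
      rw [Metric.mem_ball, dist_zero_right, not_lt] at hu2
      constructor
      · rw [Metric.mem_closedBall, dist_zero_right]
        calc ‖h - u‖ ≤ ‖h‖ + ‖u‖ := norm_sub_le _ _
          _ ≤ 2 * t := by linarith
      · rw [Metric.mem_ball, dist_zero_right, not_lt]
        calc t / 4 = t / 2 - t / 4 := by ring
          _ ≤ ‖u‖ - ‖h‖ := by linarith
          _ ≤ ‖h - u‖ := by
              have := norm_sub_norm_le u h
              have h5 : ‖u - h‖ = ‖h - u‖ := norm_sub_rev u h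
              linarith [norm_sub_norm_le u h]
    have hSJ : ∫⁻ u in S, bT d P g u ^ q ∂volume ≤ J := lintegral_mono_set hSA
    have step1 : bT d P g h ^ q * volume S ≤ 2 ^ (q + 1) * J := by
      have h6 : (2 : ℝ≥0∞) ^ (q + 1) = 2 ^ q * 2 := by
        rw [ENNReal.rpow_add _ _ (by norm_num) (by norm_num), ENNReal.rpow_one]
      calc bT d P g h ^ q * volume S ≤ 2 ^ q * ((∫⁻ u in S, bT d P g u ^ q ∂volume) +
            ∫⁻ u in S, bT d P g (h - u) ^ q ∂volume) := hint1
        _ ≤ 2 ^ q * (J + J) := by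
            refine mul_le_mul_right (add_le_add hSJ hcv) _
        _ = 2 ^ (q + 1) * J := by rw [h6]; ring
    -- bound J via ν
    have step2 : J ≤ ENNReal.ofReal ((2 * t) ^ (ℓ * q + d)) * ν (Metric.closedBall 0 (2 * t)) := by
      have hptA : ∀ u ∈ A, bT d P g u ^ q ≤ ENNReal.ofReal ((2 * t) ^ (ℓ * q + d)) * F u := by
        intro u hu
        obtain ⟨hu1, hu2⟩ := hu
        rw [Metric.mem_closedBall, dist_zero_right] at hu1
        rw [Metric.mem_ball, dist_zero_right, not_lt] at hu2
        have hupos : (0 : ℝ) < ‖u‖ := lt_of_lt_of_le (by linarith) hu2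
        have e1 : ENNReal.ofReal (‖u‖ ^ (-(ℓ * q) - d)) * ENNReal.ofReal (‖u‖ ^ (ℓ * q + d)) =
            1 := by
          rw [← ENNReal.ofReal_mul (Real.rpow_nonneg (norm_nonneg u) _),
            ← Real.rpow_add hupos]
          norm_num
        have e2 : ENNReal.ofReal (‖u‖ ^ (ℓ * q + d)) ≤
            ENNReal.ofReal ((2 * t) ^ (ℓ * q + d)) :=
          ENNReal.ofReal_le_ofReal (Real.rpow_le_rpow (norm_nonneg u) hu1 (by positivity))
        calc bT d P g u ^ q
            = bT d P g u ^ q * (ENNReal.ofReal (‖u‖ ^ (-(ℓ * q) - d)) *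
              ENNReal.ofReal (‖u‖ ^ (ℓ * q + d))) := by rw [e1, mul_one]
          _ = F u * ENNReal.ofReal (‖u‖ ^ (ℓ * q + d)) := by rw [hF]; ring
          _ ≤ F u * ENNReal.ofReal ((2 * t) ^ (ℓ * q + d)) := mul_le_mul_right e2 _
          _ = ENNReal.ofReal ((2 * t) ^ (ℓ * q + d)) * F u := mul_comm _ _
      calc J ≤ ∫⁻ u in A, ENNReal.ofReal ((2 * t) ^ (ℓ * q + d)) * F u ∂volume :=
            setLIntegral_mono (hFmeas.const_mul _) hptA
        _ = ENNReal.ofReal ((2 * t) ^ (ℓ * q + d)) * ∫⁻ u in A, F u ∂volume :=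
            lintegral_const_mul _ hFmeas
        _ ≤ ENNReal.ofReal ((2 * t) ^ (ℓ * q + d)) * ν (Metric.closedBall 0 (2 * t)) := by
            refine mul_le_mul_right ?_ _
            rw [hν, withDensity_apply _ measurableSet_closedBall]
            exact lintegral_mono_set Set.diff_subset
    -- lower bound for volume S
    have step3 : ENNReal.ofReal (t ^ d * cd) * Bv ≤ volume S := by
      have h7 : volume S = volume (Metric.closedBall (0 : EuclideanSpace ℝ (Fin d)) t) -
          volume (Metric.ball (0 : EuclideanSpace ℝ (Fin d)) (t / 2)) := by
        rw [hS]
        refine measure_diff ?_ measurableSet_ball.nullMeasurableSet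
          measure_ball_lt_top.ne
        exact (Metric.ball_subset_ball (by linarith)).trans Metric.ball_subset_closedBall
      rw [h7, Measure.addHaar_closedBall _ _ ht.le,
        Measure.addHaar_ball _ _ (by positivity : (0 : ℝ) ≤ t / 2),
        finrank_euclideanSpace_fin]
      have h8 : ENNReal.ofReal (t ^ d) * Bv - ENNReal.ofReal ((t / 2) ^ d) * Bv =
          (ENNReal.ofReal (t ^ d) - ENNReal.ofReal ((t / 2) ^ d)) * Bv :=
        (ENNReal.sub_mul (fun _ _ => hBvfin)).symm
      rw [h8, ← ENNReal.ofReal_sub _ (by positivity)]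
      apply mul_le_mul_left
      apply ENNReal.ofReal_le_ofReal
      have h9 : (t / 2) ^ d = t ^ d * (1 / 2 : ℝ) ^ d := by
        rw [div_pow, one_div_pow, div_eq_mul_one_div]
      rw [h9, hcd]; ring_nf; exact le_refl _
    -- combine everything
    have hτr : (t ^ (-ℓ)) ^ q * ((t : ℝ) ^ d)⁻¹ * (2 * t) ^ (ℓ * q + d) =
        (2 : ℝ) ^ (ℓ * q + d) := by
      rw [← Real.rpow_natCast t d, ← Real.rpow_mul ht.le, ← Real.rpow_neg ht.le,
        Real.mul_rpow (by norm_num) ht.le]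
      calc t ^ (-ℓ * q) * t ^ (-(d : ℝ)) * ((2 : ℝ) ^ (ℓ * q + d) * t ^ (ℓ * q + d))
          = (2 : ℝ) ^ (ℓ * q + d) * (t ^ (-ℓ * q) * t ^ (-(d : ℝ)) * t ^ (ℓ * q + d)) := by
            ring
        _ = (2 : ℝ) ^ (ℓ * q + d) * t ^ (-ℓ * q + -(d : ℝ) + (ℓ * q + d)) := by
            rw [← Real.rpow_add ht, ← Real.rpow_add ht]
        _ = (2 : ℝ) ^ (ℓ * q + d) := by
            rw [show -ℓ * q + -(d : ℝ) + (ℓ * q + d) = 0 by ring, Real.rpow_zero, mul_one]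
    have hcombine : (ENNReal.ofReal (t ^ (-ℓ)) * bT d P g h) ^ q * C0 ≤
        K * ν (Metric.closedBall 0 (2 * t)) := by
      have hm1 : bT d P g h ^ q * (ENNReal.ofReal (t ^ d * cd) * Bv) ≤
          2 ^ (q + 1) * (ENNReal.ofReal ((2 * t) ^ (ℓ * q + d)) *
            ν (Metric.closedBall 0 (2 * t))) := by
        calc bT d P g h ^ q * (ENNReal.ofReal (t ^ d * cd) * Bv)
            ≤ bT d P g h ^ q * volume S := mul_le_mul_right step3 _
          _ ≤ 2 ^ (q + 1) * J := step1
          _ ≤ _ := by exact mul_le_mul_right step2 _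
      have hm2 := mul_le_mul_right hm1 (ENNReal.ofReal ((t ^ (-ℓ)) ^ q * ((t : ℝ) ^ d)⁻¹))
      refine le_trans (le_of_eq ?_) (le_trans hm2 (le_of_eq ?_))
      · rw [ENNReal.mul_rpow_of_nonneg _ _ hq0.le,
          ENNReal.ofReal_rpow_of_pos (Real.rpow_pos_of_pos ht _), hC0]
        rw [show ENNReal.ofReal ((t ^ (-ℓ)) ^ q * ((t : ℝ) ^ d)⁻¹) *
            (bT d P g h ^ q * (ENNReal.ofReal (t ^ d * cd) * Bv)) =
            ENNReal.ofReal ((t ^ (-ℓ)) ^ q * ((t : ℝ) ^ d)⁻¹) *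
              ENNReal.ofReal (t ^ d * cd) * Bv * bT d P g h ^ q from by ring]
        rw [← ENNReal.ofReal_mul (by positivity)]
        rw [show (t ^ (-ℓ)) ^ q * ((t : ℝ) ^ d)⁻¹ * (t ^ d * cd) =
            (t ^ (-ℓ)) ^ q * cd * (((t : ℝ) ^ d)⁻¹ * (t : ℝ) ^ d) from by ring,
          inv_mul_cancel₀ (pow_pos ht d).ne', mul_one]
        rw [ENNReal.ofReal_mul (by positivity)]
        ring
      · rw [hK]
        rw [show ENNReal.ofReal ((t ^ (-ℓ)) ^ q * ((t : ℝ) ^ d)⁻¹) *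
            (2 ^ (q + 1) * (ENNReal.ofReal ((2 * t) ^ (ℓ * q + d)) *
              ν (Metric.closedBall 0 (2 * t)))) =
            2 ^ (q + 1) * (ENNReal.ofReal ((t ^ (-ℓ)) ^ q * ((t : ℝ) ^ d)⁻¹) *
              ENNReal.ofReal ((2 * t) ^ (ℓ * q + d)) *
              ν (Metric.closedBall 0 (2 * t))) from by ring]
        rw [← ENNReal.ofReal_mul (by positivity), hτr]
        ring
    rw [ENNReal.le_div_iff_mul_le (Or.inl hC0pos) (Or.inl hC0fin)]
    exact hcombine
  -- supremum version
  set KC : ℝ≥0∞ := (K / C0) ^ (1 / q) with hKC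
  have hKCfin : KC ≠ ⊤ := by
    rw [hKC]
    apply ENNReal.rpow_ne_top_of_nonneg (by positivity)
    exact (ENNReal.div_lt_top hKfin hC0pos).ne
  have hOmBound : ∀ t : ℝ, 0 < t →
      ENNReal.ofReal (t ^ (-ℓ)) * bOm d P g (t / 4) ≤
      KC * ν (Metric.closedBall 0 (2 * t)) ^ (1 / q) := by
    intro t ht
    rw [bOm, ENNReal.mul_iSup]
    refine iSup_le fun h => ?_
    rw [ENNReal.mul_iSup]
    refine iSup_le fun hh => ?_
    have h1 := key t ht h hh
    have h2 : ENNReal.ofReal (t ^ (-ℓ)) * bT d P g h =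
        ((ENNReal.ofReal (t ^ (-ℓ)) * bT d P g h) ^ q) ^ (1 / q) := by
      rw [← ENNReal.rpow_mul, mul_one_div, div_self hq0', ENNReal.rpow_one]
    rw [h2]
    calc ((ENNReal.ofReal (t ^ (-ℓ)) * bT d P g h) ^ q) ^ (1 / q)
        ≤ (K * ν (Metric.closedBall 0 (2 * t)) / C0) ^ (1 / q) :=
          ENNReal.rpow_le_rpow h1 (by positivity)
      _ = KC * ν (Metric.closedBall 0 (2 * t)) ^ (1 / q) := by
          rw [hKC, ← ENNReal.mul_rpow_of_nonneg _ _ (by positivity : (0:ℝ) ≤ 1 / q)]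
          congr 1
          rw [ENNReal.div_eq_inv_mul, ENNReal.div_eq_inv_mul]
          ring
  -- the measure of small balls tends to 0
  have hsingleton : ν ({0} : Set (EuclideanSpace ℝ (Fin d))) = 0 := by
    have hv0 : volume ({0} : Set (EuclideanSpace ℝ (Fin d))) = 0 := by
      rw [← Metric.closedBall_zero (x := (0 : EuclideanSpace ℝ (Fin d))),
        Measure.addHaar_closedBall _ _ le_rfl, finrank_euclideanSpace_fin,
        zero_pow (by omega : d ≠ 0)]
      simp
    rw [hν, withDensity_apply _ (measurableSet_singleton 0)]
    exact setLIntegral_measure_zero _ _ hv0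
  have hiInter : ⋂ n : ℕ, Metric.closedBall (0 : EuclideanSpace ℝ (Fin d)) (1 / (n + 1)) =
      ({0} : Set (EuclideanSpace ℝ (Fin d))) := by
    ext x
    simp only [Set.mem_iInter, Metric.mem_closedBall, dist_zero_right, Set.mem_singleton_iff]
    constructor
    · intro hx
      have h1 : ‖x‖ ≤ 0 := by
        refine ge_of_tendsto tendsto_one_div_add_atTop_nhds_zero_nat ?_
        exact Filter.Eventually.of_forall hx
      rw [← norm_eq_zero]
      exact le_antisymm h1 (norm_nonneg x)
    · rintro rfl
      intro n
      rw [norm_zero]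
      positivity
  have hshrink : Tendsto (fun n : ℕ =>
      ν (Metric.closedBall (0 : EuclideanSpace ℝ (Fin d)) (1 / (n + 1)))) atTop (𝓝 0) := by
    have h1 := tendsto_measure_iInter_atTop (μ := ν)
      (s := fun n : ℕ => Metric.closedBall (0 : EuclideanSpace ℝ (Fin d)) (1 / (n + 1)))
      (fun n => measurableSet_closedBall.nullMeasurableSet)
      (fun n m hnm => Metric.closedBall_subset_closedBall (by
        have h2 : (n : ℝ) + 1 ≤ (m : ℝ) + 1 := by exact_mod_cast by omega
        exact one_div_le_one_div_of_le (by positivity) h2))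
      ⟨0, ((measure_mono (Set.subset_univ _)).trans_lt (lt_top_iff_ne_top.2 hνfin)).ne⟩
    rw [hiInter, hsingleton] at h1
    exact h1
  -- conclude
  rw [ENNReal.tendsto_nhds_zero]
  intro ε hε
  set ε1 : ℝ≥0∞ := min ε 1 with hε1
  have hε1pos : 0 < ε1 := lt_min hε (by norm_num)
  have hε1fin : ε1 ≠ ⊤ := by
    rw [hε1]
    exact (min_le_right _ _).trans_lt (by norm_num) |>.ne
  rcases eq_or_ne KC 0 with hKC0 | hKC0
  · filter_upwards [self_mem_nhdsWithin] with t ht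
    have := hOmBound t ht
    rw [hKC0, zero_mul] at this
    exact this.trans zero_le
  set δ : ℝ≥0∞ := (ε1 / KC) ^ q with hδ
  have hδpos : 0 < δ := by
    rw [hδ]
    apply ENNReal.rpow_pos
    · exact ENNReal.div_pos hε1pos.ne' hKCfin
    · exact (ENNReal.div_lt_top hε1fin hKC0).ne
  obtain ⟨N, hN⟩ := (hshrink.eventually_lt_const hδpos).exists
  have hr0 : (0 : ℝ) < 1 / (2 * (N + 1)) := by positivity
  filter_upwards [Ioo_mem_nhdsGT hr0] with t ht
  obtain ⟨ht0, ht1⟩ := ht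
  have hsub : Metric.closedBall (0 : EuclideanSpace ℝ (Fin d)) (2 * t) ⊆
      Metric.closedBall (0 : EuclideanSpace ℝ (Fin d)) (1 / (N + 1)) := by
    apply Metric.closedBall_subset_closedBall
    have hNpos : (0 : ℝ) < 2 * ((N : ℝ) + 1) := by positivity
    have hNpos2 : (0 : ℝ) < (N : ℝ) + 1 := by positivity
    rw [lt_div_iff₀ hNpos] at ht1
    rw [le_div_iff₀ hNpos2]
    nlinarith
  have hν2 : ν (Metric.closedBall (0 : EuclideanSpace ℝ (Fin d)) (2 * t)) ≤ δ :=
    (measure_mono hsub).trans hN.le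
  calc ENNReal.ofReal (t ^ (-ℓ)) * bOm d P g (t / 4)
      ≤ KC * ν (Metric.closedBall 0 (2 * t)) ^ (1 / q) := hOmBound t ht0
    _ ≤ KC * δ ^ (1 / q) := mul_le_mul_right (ENNReal.rpow_le_rpow hν2 (by positivity)) _
    _ = KC * (ε1 / KC) := by
        rw [hδ, ← ENNReal.rpow_mul, mul_one_div, div_self hq0', ENNReal.rpow_one]
    _ ≤ ε1 := ENNReal.mul_div_le
    _ ≤ ε := min_le_left _ _

/-- The mollification estimate `‖φ_n * g - g‖_p ≤ ω(2^{-n})`. -/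
lemma moll {p : ℝ} (hp : 1 ≤ p) {g : EuclideanSpace ℝ (Fin d) → ℝ} (hgm : Measurable g)
    (hg : MemLp g (ENNReal.ofReal p) volume) {φ : EuclideanSpace ℝ (Fin d) → ℝ}
    (hφc : Continuous φ) (hφsupp : Function.support φ ⊆ Metric.ball 0 1)
    (hφ0 : ∀ x, 0 ≤ φ x) (hφint : ∫ x, φ x = 1) (n : ℕ) :
    eLpNorm (fun x => (∫ z, (2 : ℝ) ^ (n * d) * φ ((2 : ℝ) ^ n • (x - z)) * g z) - g x)
      (ENNReal.ofReal p) volume ≤ bOm d (ENNReal.ofReal p) g (((2 : ℝ) ^ n)⁻¹) := by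
  have hp0 : (0 : ℝ) < p := by linarith
  have hP1 : (1 : ℝ≥0∞) ≤ ENNReal.ofReal p := by
    rw [← ENNReal.ofReal_one]; exact ENNReal.ofReal_le_ofReal hp
  have hPne0 : (ENNReal.ofReal p) ≠ 0 := (ENNReal.ofReal_pos.2 hp0).ne'
  have hPnt : (ENNReal.ofReal p) ≠ ⊤ := ENNReal.ofReal_ne_top
  have hPtoReal : (ENNReal.ofReal p).toReal = p := ENNReal.toReal_ofReal hp0.le
  have hloc : LocallyIntegrable g volume := hg.locallyIntegrable hP1
  set s : ℝ := (2 : ℝ) ^ n with hs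
  set c : ℝ := (2 : ℝ) ^ (n * d) with hc
  have hspos : (0 : ℝ) < s := pow_pos two_pos n
  have hs1 : (1 : ℝ) ≤ s := one_le_pow₀ one_le_two
  set r : ℝ := s⁻¹ with hr
  set W : EuclideanSpace ℝ (Fin d) → ℝ := fun u => c * φ (s • u) with hW
  have hWc : Continuous W := continuous_const.mul (hφc.comp (continuous_const_smul s))
  have hW0 : ∀ u, 0 ≤ W u := fun u => mul_nonneg (by positivity) (hφ0 _)
  have hWsmall : ∀ u, W u ≠ 0 → ‖u‖ ≤ r := by
    intro u hu
    have h1 : φ (s • u) ≠ 0 := fun h0 => hu (by simp [hW, h0])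
    have h2 := hφsupp (Function.mem_support.2 h1)
    rw [mem_ball_zero_iff] at h2
    have h3 : ‖s • u‖ = s * ‖u‖ := by
      rw [norm_smul, Real.norm_eq_abs, abs_of_pos hspos]
    rw [hr, ← one_div]
    rw [le_div_iff₀ hspos]
    nlinarith
  have hWsupp2 : HasCompactSupport W := by
    apply HasCompactSupport.intro (isCompact_closedBall (0 : EuclideanSpace ℝ (Fin d)) r)
    intro u hu
    by_contra hne
    exact hu (by rw [Metric.mem_closedBall, dist_zero_right]; exact hWsmall u hne)
  have hWint : Integrable W volume := hWc.integrable_of_hasCompactSupport hWsupp2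
  have hWint1 : ∫ u, W u = 1 := by
    have h1 : ∫ u, W u = c * ∫ u, φ (s • u) := by rw [hW, integral_const_mul]
    have h2 : ∫ u : EuclideanSpace ℝ (Fin d), φ (s • u) = |(s ^ d)⁻¹| • ∫ u, φ u := by
      have := MeasureTheory.Measure.integral_comp_smul
        (volume : Measure (EuclideanSpace ℝ (Fin d))) φ s
      simpa [finrank_euclideanSpace_fin] using this
    have h3 : |(s ^ d)⁻¹| = (s ^ d)⁻¹ := abs_of_pos (by positivity)
    have h4 : c = s ^ d := by rw [hc, hs, pow_mul]
    rw [h1, h2, h3, hφint, smul_eq_mul, mul_one, h4]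
    field_simp
  have hWmeas : Measurable fun u => ENNReal.ofReal (W u) := hWc.measurable.ennreal_ofReal
  have hlint1 : ∫⁻ u, ENNReal.ofReal (W u) = 1 := by
    rw [← ofReal_integral_eq_lintegral_ofReal hWint (Filter.Eventually.of_forall hW0), hWint1,
      ENNReal.ofReal_one]
  set ν : Measure (EuclideanSpace ℝ (Fin d)) :=
    volume.withDensity (fun u => ENNReal.ofReal (W u)) with hν
  have hν1 : ν Set.univ = 1 := by
    rw [hν, withDensity_apply _ MeasurableSet.univ, setLIntegral_univ, hlint1]
  -- pointwise identity
  have Ig : ∀ x, Integrable (fun u => W u * g (x - u)) volume := by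
    intro x
    have h1 : Integrable (fun z => W (x - z) * g z) volume := by
      have := hloc.integrable_smul_left_of_hasCompactSupport
        (hWc.comp (continuous_const.sub continuous_id))
        (hWsupp2.comp_homeomorph (Homeomorph.subLeft x))
      simpa [smul_eq_mul] using this
    have h2 := ((mp_subLeft x).integrable_comp_emb
      (MeasurableEquiv.subLeft x).measurableEmbedding
      (g := fun z => W (x - z) * g z)).2 h1
    have h3 : ((fun z => W (x - z) * g z) ∘ fun u => x - u) = fun u => W u * g (x - u) := by
      funext u; simp [_root_.sub_sub_cancel]
    rwa [h3] at h2
  have key1 : ∀ x, (∫ z, c * φ (s • (x - z)) * g z) = ∫ u, W u * g (x - u) := by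
    intro x
    have h1 := (mp_subLeft x).integral_comp (MeasurableEquiv.subLeft x).measurableEmbedding
      (fun z => W (x - z) * g z)
    calc ∫ z, c * φ (s • (x - z)) * g z = ∫ z, W (x - z) * g z := rfl
      _ = ∫ u, W (x - (x - u)) * g (x - u) := h1.symm
      _ = ∫ u, W u * g (x - u) := by
          have e : ∀ u : EuclideanSpace ℝ (Fin d), x - (x - u) = u := fun u => by abel
          simp only [e]
  have key2 : ∀ x, (∫ z, c * φ (s • (x - z)) * g z) - g x = ∫ u, W u * (g (x - u) - g x) := by
    intro x
    have h1 : ∫ u, W u * (g (x - u) - g x) =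
        (∫ u, W u * g (x - u)) - ∫ u, W u * g x := by
      rw [← integral_sub (Ig x) (hWint.mul_const (g x))]
      congr 1; funext u; ring
    rw [h1, integral_mul_const, hWint1, one_mul, key1 x]
  -- the main estimate
  rw [eLpNorm_eq_lintegral_rpow_enorm_toReal hPne0 hPnt, hPtoReal]
  have main : ∫⁻ x, (‖(∫ z, c * φ (s • (x - z)) * g z) - g x‖₊ : ℝ≥0∞) ^ p ≤
      (bOm d (ENNReal.ofReal p) g r) ^ p := by
    have hgmeasxu : Measurable fun xu : EuclideanSpace ℝ (Fin d) × EuclideanSpace ℝ (Fin d) =>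
        ENNReal.ofReal (W xu.2) * (‖g (xu.1 - xu.2) - g xu.1‖₊ : ℝ≥0∞) ^ p :=
      ((hWc.measurable.comp measurable_snd).ennreal_ofReal).mul
        (((((hgm.comp (measurable_fst.sub measurable_snd)).sub
          (hgm.comp measurable_fst)).nnnorm).coe_nnreal_ennreal).pow_const p)
    have step1 : ∀ x, (‖(∫ z, c * φ (s • (x - z)) * g z) - g x‖₊ : ℝ≥0∞) ^ p ≤
        ∫⁻ u, ENNReal.ofReal (W u) * (‖g (x - u) - g x‖₊ : ℝ≥0∞) ^ p := by
      intro x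
      have humeas : Measurable fun u => (‖g (x - u) - g x‖₊ : ℝ≥0∞) :=
        (((hgm.comp (measurable_const.sub measurable_id)).sub
          measurable_const).nnnorm).coe_nnreal_ennreal
      have e1 : (‖(∫ z, c * φ (s • (x - z)) * g z) - g x‖₊ : ℝ≥0∞) ≤
          ∫⁻ u, ENNReal.ofReal (W u) * (‖g (x - u) - g x‖₊ : ℝ≥0∞) := by
        rw [key2 x]
        refine le_trans (enorm_integral_le_lintegral_enorm _) (le_of_eq ?_)
        apply lintegral_congr
        intro u
        rw [← Real.enorm_eq_ofReal (hW0 u)]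
        rw [enorm_mul]
        rfl
      have e2 : (∫⁻ u, ENNReal.ofReal (W u) * (‖g (x - u) - g x‖₊ : ℝ≥0∞)) ^ p ≤
          ∫⁻ u, ENNReal.ofReal (W u) * (‖g (x - u) - g x‖₊ : ℝ≥0∞) ^ p := by
        have j1 : ∫⁻ u, ENNReal.ofReal (W u) * (‖g (x - u) - g x‖₊ : ℝ≥0∞) =
            ∫⁻ u, (‖g (x - u) - g x‖₊ : ℝ≥0∞) ∂ν := by
          rw [hν, lintegral_withDensity_eq_lintegral_mul _ hWmeas humeas]; rfl
        have j2 : ∫⁻ u, ENNReal.ofReal (W u) * (‖g (x - u) - g x‖₊ : ℝ≥0∞) ^ p =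
            ∫⁻ u, (‖g (x - u) - g x‖₊ : ℝ≥0∞) ^ p ∂ν := by
          rw [hν, lintegral_withDensity_eq_lintegral_mul _ hWmeas (humeas.pow_const p)]; rfl
        rw [j1, j2]
        exact jensen_prob hν1 humeas.aemeasurable hp
      calc (‖(∫ z, c * φ (s • (x - z)) * g z) - g x‖₊ : ℝ≥0∞) ^ p ≤
          (∫⁻ u, ENNReal.ofReal (W u) * (‖g (x - u) - g x‖₊ : ℝ≥0∞)) ^ p :=
            ENNReal.rpow_le_rpow e1 hp0.le
        _ ≤ _ := e2
    have hbTpow : ∀ u : EuclideanSpace ℝ (Fin d),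
        ∫⁻ x, (‖g (x - u) - g x‖₊ : ℝ≥0∞) ^ p = (bT d (ENNReal.ofReal p) g (-u)) ^ p := by
      intro u
      rw [bT, eLpNorm_eq_lintegral_rpow_enorm_toReal hPne0 hPnt, hPtoReal, ← ENNReal.rpow_mul,
        one_div, inv_mul_cancel₀ hp0.ne', ENNReal.rpow_one]
      apply lintegral_congr
      intro x
      rw [sub_eq_add_neg x u]; rfl
    calc ∫⁻ x, (‖(∫ z, c * φ (s • (x - z)) * g z) - g x‖₊ : ℝ≥0∞) ^ p
        ≤ ∫⁻ x, ∫⁻ u, ENNReal.ofReal (W u) * (‖g (x - u) - g x‖₊ : ℝ≥0∞) ^ p :=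
          lintegral_mono step1
      _ = ∫⁻ u, ∫⁻ x, ENNReal.ofReal (W u) * (‖g (x - u) - g x‖₊ : ℝ≥0∞) ^ p :=
          lintegral_lintegral_swap hgmeasxu.aemeasurable
      _ = ∫⁻ u, ENNReal.ofReal (W u) * ∫⁻ x, (‖g (x - u) - g x‖₊ : ℝ≥0∞) ^ p := by
          apply lintegral_congr
          intro u
          have hm : Measurable fun x => (‖g (x - u) - g x‖₊ : ℝ≥0∞) ^ p :=
            ((((hgm.comp (measurable_id.sub measurable_const)).sub
              hgm).nnnorm).coe_nnreal_ennreal).pow_const p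
          rw [lintegral_const_mul _ hm]
      _ ≤ ∫⁻ u, ENNReal.ofReal (W u) * (bOm d (ENNReal.ofReal p) g r) ^ p := by
          apply lintegral_mono
          intro u
          dsimp only
          rw [hbTpow u]
          by_cases hWu : W u = 0
          · simp [hWu]
          · refine mul_le_mul_right (ENNReal.rpow_le_rpow ?_ hp0.le) _
            exact bT_le_bOm _ (by rw [norm_neg]; exact hWsmall u hWu)
      _ = (bOm d (ENNReal.ofReal p) g r) ^ p := by
          rw [lintegral_mul_const _ hWmeas, hlint1, one_mul]
  calc (∫⁻ x, (‖(∫ z, c * φ (s • (x - z)) * g z) - g x‖₊ : ℝ≥0∞) ^ p) ^ (1 / p)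
      ≤ ((bOm d (ENNReal.ofReal p) g r) ^ p) ^ (1 / p) :=
        ENNReal.rpow_le_rpow main (by positivity)
    _ = bOm d (ENNReal.ofReal p) g r := by
        rw [← ENNReal.rpow_mul, mul_one_div, div_self hp0.ne', ENNReal.rpow_one]

/-- Continuity of the mollification. -/
lemma conv_cont {p : ℝ} (hp : 1 ≤ p) {g : EuclideanSpace ℝ (Fin d) → ℝ}
    (hg : MemLp g (ENNReal.ofReal p) volume) {φ : EuclideanSpace ℝ (Fin d) → ℝ}
    (hφc : Continuous φ) (hφsupp : Function.support φ ⊆ Metric.ball 0 1) (n : ℕ) :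
    Continuous (fun x => ∫ z, (2 : ℝ) ^ (n * d) * φ ((2 : ℝ) ^ n • (x - z)) * g z) := by
  have hP1 : (1 : ℝ≥0∞) ≤ ENNReal.ofReal p := by
    rw [← ENNReal.ofReal_one]; exact ENNReal.ofReal_le_ofReal hp
  have hloc : LocallyIntegrable g volume := hg.locallyIntegrable hP1
  set s : ℝ := (2 : ℝ) ^ n with hs
  set c : ℝ := (2 : ℝ) ^ (n * d) with hc
  have hs1 : (1 : ℝ) ≤ s := one_le_pow₀ one_le_two
  set W : EuclideanSpace ℝ (Fin d) → ℝ := fun u => c * φ (s • u) with hW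
  have hWc : Continuous W := continuous_const.mul (hφc.comp (continuous_const_smul s))
  have hWsupp : HasCompactSupport W := by
    apply HasCompactSupport.intro (isCompact_closedBall (0 : EuclideanSpace ℝ (Fin d)) 1)
    intro u hu
    by_contra hne
    have h1 : φ (s • u) ≠ 0 := fun h0 => hne (by simp [hW, h0])
    have h2 : s • u ∈ Metric.ball (0 : EuclideanSpace ℝ (Fin d)) 1 :=
      hφsupp (Function.mem_support.2 h1)
    rw [mem_ball_zero_iff] at h2
    apply hu
    rw [Metric.mem_closedBall, dist_zero_right]
    have h3 : ‖s • u‖ = s * ‖u‖ := by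
      rw [norm_smul, Real.norm_eq_abs, abs_of_pos (by linarith)]
    nlinarith [norm_nonneg u]
  have key : (fun x => ∫ z, c * φ (s • (x - z)) * g z) =
      convolution W g (ContinuousLinearMap.mul ℝ ℝ) volume := by
    funext x
    rw [convolution]
    have := (mp_subLeft x).integral_comp (MeasurableEquiv.subLeft x).measurableEmbedding
      (fun z => W (x - z) * g z)
    calc ∫ z, c * φ (s • (x - z)) * g z = ∫ z, W (x - z) * g z := by rfl
      _ = ∫ t, W (x - (x - t)) * g (x - t) := this.symm
      _ = ∫ t, W t * g (x - t) := by
          have e : ∀ t : EuclideanSpace ℝ (Fin d), x - (x - t) = t := fun t => by abel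
          simp only [e]
      _ = ∫ t, (ContinuousLinearMap.mul ℝ ℝ) (W t) (g (x - t)) := rfl
  rw [key]
  exact hWsupp.continuous_convolution_left _ hWc hloc

lemma claimB {p : ℝ} (hp : 1 ≤ p) {g : EuclideanSpace ℝ (Fin d) → ℝ} (hgm : Measurable g)
    (hg : MemLp g (ENNReal.ofReal p) volume) {φ : EuclideanSpace ℝ (Fin d) → ℝ}
    (hφc : Continuous φ) (hφsupp : Function.support φ ⊆ Metric.ball 0 1)
    (hφ0 : ∀ x, 0 ≤ φ x) (hφint : ∫ x, φ x = 1)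
    {ψ : ℤ → ℝ → ℝ}
    (hψ0 : ∀ k y, 0 ≤ ψ k y)
    (hψsupp : ∀ k, Function.support (ψ k) ⊆
      Set.Ioo (7 * (2 : ℝ) ^ (-k - 4 : ℤ)) (9 * (2 : ℝ) ^ (-k - 3 : ℤ)))
    (hψsum : ∀ y : ℝ, 0 < y → HasSum (fun k : ℤ => ψ k y) 1)
    {y : ℝ} (hy : 0 < y) (hy2 : y < 7 / 16) :
    eLpNorm (fun x => burenkovExt d φ ψ g (x, y) - g x) (ENNReal.ofReal p) volume ≤
      bOm d (ENNReal.ofReal p) g (3 * y) := by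
  have hP1 : (1 : ℝ≥0∞) ≤ ENNReal.ofReal p := by
    rw [← ENNReal.ofReal_one]; exact ENNReal.ofReal_le_ofReal hp
  have hsupp_a : ∀ k : ℕ, ψ ((k : ℤ) + 1) y ≠ 0 →
      7 * ((2 : ℝ) ^ (k + 5))⁻¹ < y ∧ y < 9 * ((2 : ℝ) ^ (k + 4))⁻¹ := by
    intro k hk
    have hmem := hψsupp ((k : ℤ) + 1) (Function.mem_support.2 hk)
    have e1 : (-((k : ℤ) + 1) - 4) = -((k + 5 : ℕ) : ℤ) := by push_cast; ring
    have e2 : (-((k : ℤ) + 1) - 3) = -((k + 4 : ℕ) : ℤ) := by push_cast; ring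
    rw [e1, e2, zpow_neg, zpow_neg, zpow_natCast, zpow_natCast] at hmem
    exact ⟨hmem.1, hmem.2⟩
  have hfin : (Function.support fun k : ℕ => ψ ((k : ℤ) + 1) y).Finite := by
    obtain ⟨N, hN⟩ := pow_unbounded_of_one_lt (R := ℝ) (9 / y) one_lt_two
    apply Set.Finite.subset (Set.finite_Iio N)
    intro k hk
    have h2 := (hsupp_a k hk).2
    have hpow : (0 : ℝ) < (2 : ℝ) ^ (k + 4) := by positivity
    have hinv : (2 : ℝ) ^ (k + 4) * ((2 : ℝ) ^ (k + 4))⁻¹ = 1 := mul_inv_cancel₀ hpow.ne'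
    have h3 : (2 : ℝ) ^ k ≤ (2 : ℝ) ^ (k + 4) := pow_le_pow_right₀ one_le_two (by omega)
    have h4 : (2 : ℝ) ^ k < 9 / y := by
      rw [lt_div_iff₀ hy]
      nlinarith
    have h5 : (2 : ℝ) ^ k < (2 : ℝ) ^ N := lt_trans h4 hN
    show k < N
    by_contra hc
    push_neg at hc
    have := pow_le_pow_right₀ (one_le_two (α := ℝ)) hc
    linarith
  have hzero : ∀ j : ℤ, j ∉ Set.range (fun k : ℕ => (k : ℤ) + 1) → ψ j y = 0 := by
    intro j hj
    by_contra hne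
    have hmem := hψsupp j (Function.mem_support.2 hne)
    have hj1 : j ≤ 0 := by
      by_contra hj0
      push_neg at hj0
      refine hj ⟨(j - 1).toNat, ?_⟩
      have ht : ((j - 1).toNat : ℤ) = j - 1 := Int.toNat_of_nonneg (by omega)
      show ((j - 1).toNat : ℤ) + 1 = j
      omega
    have h2 : (2 : ℝ) ^ (-(4 : ℤ)) ≤ (2 : ℝ) ^ (-j - 4) := by
      apply zpow_le_zpow_right₀ one_le_two (by omega)
    have h3 : (2 : ℝ) ^ (-(4 : ℤ)) = 1 / 16 := by norm_num
    have h4 := hmem.1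
    rw [h3] at h2
    linarith
  have hhs : HasSum (fun k : ℕ => ψ ((k : ℤ) + 1) y) 1 := by
    have hinj : Function.Injective (fun k : ℕ => (k : ℤ) + 1) := by
      intro a b hab
      simp only at hab
      omega
    have := (hinj.hasSum_iff hzero).2 (hψsum y hy)
    simpa [Function.comp_def] using this
  have hsum1 : ∑ k ∈ hfin.toFinset, ψ ((k : ℤ) + 1) y = 1 := by
    refine (hasSum_sum_of_ne_finset_zero ?_).unique hhs
    intro k hk
    by_contra h
    exact hk (hfin.mem_toFinset.2 (Function.mem_support.2 h))
  have hEeq : ∀ x, burenkovExt d φ ψ g (x, y) = ∑ k ∈ hfin.toFinset, ψ ((k : ℤ) + 1) y *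
      ∫ z, (2 : ℝ) ^ ((k + 1) * d) * φ ((2 : ℝ) ^ (k + 1) • (x - z)) * g z := by
    intro x
    simp only [burenkovExt]
    apply tsum_eq_sum
    intro k hk
    have h0 : ψ ((k : ℤ) + 1) y = 0 := by
      by_contra h
      exact hk (hfin.mem_toFinset.2 (Function.mem_support.2 h))
    rw [h0, zero_mul]
  have hfuneq : (fun x => burenkovExt d φ ψ g (x, y) - g x) = ∑ k ∈ hfin.toFinset,
      fun x => ψ ((k : ℤ) + 1) y •
        ((∫ z, (2 : ℝ) ^ ((k + 1) * d) * φ ((2 : ℝ) ^ (k + 1) • (x - z)) * g z) - g x) := by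
    funext x
    rw [Finset.sum_apply]
    simp only [smul_eq_mul, mul_sub]
    rw [Finset.sum_sub_distrib, ← Finset.sum_mul, hsum1, one_mul, hEeq x]
  rw [hfuneq]
  refine le_trans (eLpNorm_sum_le ?_ hP1) ?_
  · intro k _
    have h1 : AEStronglyMeasurable (fun x =>
        (∫ z, (2 : ℝ) ^ ((k + 1) * d) * φ ((2 : ℝ) ^ (k + 1) • (x - z)) * g z) - g x)
        (volume : Measure (EuclideanSpace ℝ (Fin d))) :=
      ((conv_cont hp hg hφc hφsupp (k + 1)).aestronglyMeasurable).sub hg.aestronglyMeasurable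
    exact h1.const_smul (ψ ((k : ℤ) + 1) y)
  · have hterm : ∀ k ∈ hfin.toFinset,
        eLpNorm (fun x => ψ ((k : ℤ) + 1) y •
          ((∫ z, (2 : ℝ) ^ ((k + 1) * d) * φ ((2 : ℝ) ^ (k + 1) • (x - z)) * g z) - g x))
          (ENNReal.ofReal p) volume ≤
        ENNReal.ofReal (ψ ((k : ℤ) + 1) y) * bOm d (ENNReal.ofReal p) g (3 * y) := by
      intro k hk
      have hfeq : (fun x => ψ ((k : ℤ) + 1) y •
          ((∫ z, (2 : ℝ) ^ ((k + 1) * d) * φ ((2 : ℝ) ^ (k + 1) • (x - z)) * g z) - g x)) =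
          ψ ((k : ℤ) + 1) y • (fun x =>
            (∫ z, (2 : ℝ) ^ ((k + 1) * d) * φ ((2 : ℝ) ^ (k + 1) • (x - z)) * g z) - g x) := rfl
      rw [hfeq, eLpNorm_const_smul, Real.enorm_eq_ofReal (hψ0 _ _)]
      refine mul_le_mul_right ?_ _
      refine le_trans (moll hp hgm hg hφc hφsupp hφ0 hφint (k + 1)) (bOm_mono _ ?_)
      have hak : ψ ((k : ℤ) + 1) y ≠ 0 := Function.mem_support.1 (hfin.mem_toFinset.1 hk)
      have h5 := (hsupp_a k hak).1
      have hpos : (0 : ℝ) < (2 : ℝ) ^ (k + 1) := by positivity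
      have hinvpos : (0 : ℝ) < ((2 : ℝ) ^ (k + 1))⁻¹ := by positivity
      have he : (2 : ℝ) ^ (k + 5) = (2 : ℝ) ^ (k + 1) * 16 := by
        rw [pow_add, pow_add]; ring
      have h6 : ((2 : ℝ) ^ (k + 5))⁻¹ = ((2 : ℝ) ^ (k + 1))⁻¹ / 16 := by
        rw [he, mul_inv]; ring
      rw [h6] at h5
      linarith
    calc ∑ k ∈ hfin.toFinset, eLpNorm (fun x => ψ ((k : ℤ) + 1) y •
          ((∫ z, (2 : ℝ) ^ ((k + 1) * d) * φ ((2 : ℝ) ^ (k + 1) • (x - z)) * g z) - g x))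
          (ENNReal.ofReal p) volume
        ≤ ∑ k ∈ hfin.toFinset,
          ENNReal.ofReal (ψ ((k : ℤ) + 1) y) * bOm d (ENNReal.ofReal p) g (3 * y) :=
          Finset.sum_le_sum hterm
      _ = ENNReal.ofReal (∑ k ∈ hfin.toFinset, ψ ((k : ℤ) + 1) y) *
          bOm d (ENNReal.ofReal p) g (3 * y) := by
          rw [← Finset.sum_mul, ENNReal.ofReal_sum_of_nonneg (fun k _ => hψ0 _ _)]
      _ = bOm d (ENNReal.ofReal p) g (3 * y) := by
          rw [hsum1, ENNReal.ofReal_one, one_mul]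

end BurenkovAux

/-- Boundary behaviour of the extension map: for `g` in the Besov space
`B^ℓ_{p,q}(ℝ^d)`, `ℓ = 1 - (1+α)/q`, one has
`y^{-ℓ} ‖E(g)(·,y) - g‖_{L_p(ℝ^d)} → 0` as `y → 0⁺`. -/
theorem burenkov_extension_trace (d : ℕ) (p q α ℓ N₀ : ℝ) (hp : 1 ≤ p) (hq : 1 ≤ q)
    (hα1 : -1 < α) (hα2 : α < q - 1) (hℓ : ℓ = 1 - (1 + α) / q) (hN₀ : 0 < N₀)
    (φ : EuclideanSpace ℝ (Fin d) → ℝ) (hφsmooth : ContDiff ℝ (⊤ : ℕ∞) φ)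
    (hφsupp : Function.support φ ⊆ Metric.ball 0 1)
    (hφ0 : ∀ x, 0 ≤ φ x) (hφ1 : ∀ x, φ x ≤ 1) (hφint : ∫ x, φ x = 1)
    (ψ : ℤ → ℝ → ℝ) (hψsmooth : ∀ k, ContDiff ℝ (⊤ : ℕ∞) (ψ k))
    (hψ0 : ∀ k y, 0 ≤ ψ k y) (hψ1 : ∀ k y, ψ k y ≤ 1)
    (hψsupp : ∀ k, Function.support (ψ k) ⊆
      Set.Ioo (7 * (2 : ℝ) ^ (-k - 4 : ℤ)) (9 * (2 : ℝ) ^ (-k - 3 : ℤ)))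
    (hψderiv : ∀ k y, |deriv (ψ k) y| ≤ N₀ * (2 : ℝ) ^ (k : ℤ))
    (hψsum : ∀ y : ℝ, 0 < y → HasSum (fun k : ℤ => ψ k y) 1)
    (g : EuclideanSpace ℝ (Fin d) → ℝ) (hg : MemLp g (ENNReal.ofReal p))
    (hgB : (∫⁻ h : EuclideanSpace ℝ (Fin d),
        eLpNorm (fun x => g (x + h) - g x) (ENNReal.ofReal p) volume ^ q *
          ENNReal.ofReal (‖h‖ ^ (-(ℓ * q) - d))) ^ (1 / q) ≠ ⊤) :
    Filter.Tendsto
      (fun y : ℝ => ENNReal.ofReal (y ^ (-ℓ)) *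
        eLpNorm (fun x => burenkovExt d φ ψ g (x, y) - g x) (ENNReal.ofReal p) volume)
      (nhdsWithin 0 (Set.Ioi 0)) (nhds 0) := by
  classical
  -- replace `g` by a measurable representative
  have hgsm := hg.aestronglyMeasurable
  set g' : EuclideanSpace ℝ (Fin d) → ℝ := hgsm.mk g with hg'def
  have hg'meas : Measurable g' := hgsm.stronglyMeasurable_mk.measurable
  have hgg' : g =ᵐ[volume] g' := hgsm.ae_eq_mk
  have hg' : MeasureTheory.MemLp g' (ENNReal.ofReal p) volume := (memLp_congr_ae hgg').1 hg
  have hbTeq : ∀ h, eLpNorm (fun x => g (x + h) - g x) (ENNReal.ofReal p) volume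
      = BurenkovAux.bT d (ENNReal.ofReal p) g' h := by
    intro h
    apply eLpNorm_congr_ae
    have h1 : (fun x => g (x + h)) =ᵐ[volume] (fun x => g' (x + h)) := by
      have h2 := (measurePreserving_add_right
        (volume : Measure (EuclideanSpace ℝ (Fin d))) h).quasiMeasurePreserving.ae_eq_comp hgg'
      simpa [Function.comp_def] using h2
    filter_upwards [h1, hgg'] with x hx1 hx2
    rw [hx1, hx2]
  have hEeq : ∀ x y, burenkovExt d φ ψ g (x, y) = burenkovExt d φ ψ g' (x, y) := by
    intro x y
    simp only [burenkovExt]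
    congr 1
    funext k
    congr 1
    apply integral_congr_ae
    filter_upwards [hgg'] with z hz
    rw [hz]
  have hgoal_eq : ∀ y : ℝ,
      eLpNorm (fun x => burenkovExt d φ ψ g (x, y) - g x) (ENNReal.ofReal p) volume =
      eLpNorm (fun x => burenkovExt d φ ψ g' (x, y) - g' x) (ENNReal.ofReal p) volume := by
    intro y
    apply eLpNorm_congr_ae
    filter_upwards [hgg'] with x hx
    rw [hEeq x y, hx]
  simp only [hgoal_eq]
  -- parameters
  have hq0 : (0 : ℝ) < q := by linarith
  have hl : 0 < ℓ := by
    rw [hℓ]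
    have h1 : (1 + α) / q < 1 := by
      rw [div_lt_one hq0]; linarith
    linarith
  have hP1 : (1 : ℝ≥0∞) ≤ ENNReal.ofReal p := by
    rw [← ENNReal.ofReal_one]; exact ENNReal.ofReal_le_ofReal hp
  have hPne0 : (ENNReal.ofReal p) ≠ 0 := (ENNReal.ofReal_pos.2 (by linarith)).ne'
  have hPnt : (ENNReal.ofReal p) ≠ ⊤ := ENNReal.ofReal_ne_top
  have hB : (∫⁻ h : EuclideanSpace ℝ (Fin d), BurenkovAux.bT d (ENNReal.ofReal p) g' h ^ q *
      ENNReal.ofReal (‖h‖ ^ (-(ℓ * q) - d))) ≠ ⊤ := by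
    intro hcon
    apply hgB
    have h1 : (∫⁻ h : EuclideanSpace ℝ (Fin d),
        eLpNorm (fun x => g (x + h) - g x) (ENNReal.ofReal p) volume ^ q *
          ENNReal.ofReal (‖h‖ ^ (-(ℓ * q) - d))) = ⊤ := by
      rw [← hcon]
      exact lintegral_congr fun h => by rw [hbTeq h]
    rw [h1, ENNReal.top_rpow_of_pos (by positivity)]
  have TA := BurenkovAux.claimA (ENNReal.ofReal p) hPne0 hPnt hP1 hg'meas hg' q ℓ hq hl hB
  have hcomp : Filter.Tendsto (fun y : ℝ => (12 : ℝ) * y)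
      (nhdsWithin 0 (Set.Ioi 0)) (nhdsWithin 0 (Set.Ioi 0)) := by
    rw [tendsto_nhdsWithin_iff]
    constructor
    · have h0 : Continuous fun y : ℝ => (12 : ℝ) * y := continuous_const.mul continuous_id
      have h1 := h0.tendsto (0 : ℝ)
      simpa using h1.mono_left nhdsWithin_le_nhds
    · filter_upwards [self_mem_nhdsWithin] with y hy
      have h2 : (0 : ℝ) < y := hy
      exact Set.mem_Ioi.2 (by linarith)
  have TB : Filter.Tendsto (fun y : ℝ => ENNReal.ofReal (((12 : ℝ) * y) ^ (-ℓ)) *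
      BurenkovAux.bOm d (ENNReal.ofReal p) g' ((12 : ℝ) * y / 4))
      (nhdsWithin 0 (Set.Ioi 0)) (nhds 0) := by
    have h1 := TA.comp hcomp
    simpa [Function.comp_def] using h1
  have TC : Filter.Tendsto (fun y : ℝ => ENNReal.ofReal ((12 : ℝ) ^ ℓ) *
      (ENNReal.ofReal (((12 : ℝ) * y) ^ (-ℓ)) *
        BurenkovAux.bOm d (ENNReal.ofReal p) g' ((12 : ℝ) * y / 4)))
      (nhdsWithin 0 (Set.Ioi 0)) (nhds 0) := by
    have h1 := ENNReal.Tendsto.const_mul (a := ENNReal.ofReal ((12 : ℝ) ^ ℓ)) TB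
      (Or.inr ENNReal.ofReal_ne_top)
    simpa using h1
  refine tendsto_of_tendsto_of_tendsto_of_le_of_le' tendsto_const_nhds TC ?_ ?_
  · exact Filter.Eventually.of_forall fun y => zero_le
  · filter_upwards [Ioo_mem_nhdsGT
      (by norm_num : (0 : ℝ) < 7 / 16)] with y hy
    obtain ⟨hy0, hy16⟩ := hy
    have hCB := BurenkovAux.claimB hp hg'meas hg' hφsmooth.continuous hφsupp hφ0 hφint
      hψ0 hψsupp hψsum hy0 hy16
    have h3y : (12 : ℝ) * y / 4 = 3 * y := by ring
    have hofReal : ENNReal.ofReal ((12 : ℝ) ^ ℓ) * ENNReal.ofReal (((12 : ℝ) * y) ^ (-ℓ)) =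
        ENNReal.ofReal (y ^ (-ℓ)) := by
      rw [← ENNReal.ofReal_mul (by positivity)]
      congr 1
      rw [Real.mul_rpow (by norm_num) hy0.le]
      rw [show (12 : ℝ) ^ ℓ * ((12 : ℝ) ^ (-ℓ) * y ^ (-ℓ)) =
          ((12 : ℝ) ^ ℓ * (12 : ℝ) ^ (-ℓ)) * y ^ (-ℓ) from by ring,
        ← Real.rpow_add (by norm_num : (0 : ℝ) < 12), show ℓ + -ℓ = 0 from by ring,
        Real.rpow_zero, one_mul]
    calc ENNReal.ofReal (y ^ (-ℓ)) *
          eLpNorm (fun x => burenkovExt d φ ψ g' (x, y) - g' x) (ENNReal.ofReal p) volume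
        ≤ ENNReal.ofReal (y ^ (-ℓ)) * BurenkovAux.bOm d (ENNReal.ofReal p) g' (3 * y) :=
          mul_le_mul_right hCB _
      _ = ENNReal.ofReal ((12 : ℝ) ^ ℓ) * (ENNReal.ofReal (((12 : ℝ) * y) ^ (-ℓ)) *
          BurenkovAux.bOm d (ENNReal.ofReal p) g' ((12 : ℝ) * y / 4)) := by
          rw [h3y, ← mul_assoc, hofReal]
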